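/- arXiv:2504.09400 — 2 statements merged into one kernel-verified Lean document; each statement's English description precedes it below -/
import Mathlib

section
/- Let K be a field of characteristic zero and let x, y, z ∈ K be nonzero elements satisfying z² + 3y² + x³ = 0. Set j = 16y²/(9x³). Then the quaternion algebras (−6j, −2(27j+16) | K) and (−6x, 2x | K) are isomorphic as K-algebras. -/
/-!
Rescaling the generators `i, j` of `(a, b | K)` by nonzero `u, v` gives a quaternion basis of
type `(u²a, v²b)`, so the algebra only depends on `a, b` modulo squares. Here
`-6j = (4y / 3x²)² · (-6x)`, and, using `z² = -3y² - x³`, `-2(27j + 16) = (4z / x²)² · 2x`.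
-/

open scoped Quaternion

namespace QuaternionAlgebra

namespace Basis

variable {R A : Type*} [CommRing R] [Ring A] [Algebra R A] {c₁ c₂ c₃ c₁' c₂' c₃' : R}

@[simps]
def scale (q : Basis A c₁ c₂ c₃) (u v : R) (h₁ : c₁' = u ^ 2 * c₁) (h₂ : c₂' = u * c₂)
    (h₃ : c₃' = v ^ 2 * c₃) : Basis A c₁' c₂' c₃' where
  i := u • q.i
  j := v • q.j
  k := (u * v) • q.k
  i_mul_i := by rw [smul_mul_smul_comm, q.i_mul_i, h₁, h₂]; module
  j_mul_j := by rw [smul_mul_smul_comm, q.j_mul_j, h₃]; module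
  i_mul_j := by rw [smul_mul_smul_comm, q.i_mul_j]
  j_mul_i := by rw [smul_mul_smul_comm, q.j_mul_i, h₂]; module

end Basis

variable {K : Type*} [Field K] {c₁ c₂ c₃ c₁' c₂' c₃' u v : K}

def scaleEquiv (hu : u ≠ 0) (hv : v ≠ 0) (h₁ : c₁' = u ^ 2 * c₁) (h₂ : c₂' = u * c₂)
    (h₃ : c₃' = v ^ 2 * c₃) : ℍ[K, c₁', c₂', c₃'] ≃ₐ[K] ℍ[K, c₁, c₂, c₃] :=
  AlgEquiv.ofAlgHom ((Basis.self K).scale u v h₁ h₂ h₃).liftHom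
    ((Basis.self K).scale u⁻¹ v⁻¹ (by rw [h₁]; field_simp) (by rw [h₂]; field_simp)
      (by rw [h₃]; field_simp)).liftHom
    (by ext <;> simp [Basis.lift, hu, hv])
    (by ext <;> simp [Basis.lift, hu, hv])

end QuaternionAlgebra

/-- For a field `K` of characteristic zero and nonzero `x, y, z ∈ K` with
`z² + 3y² + x³ = 0`, setting `j = 16y²/(9x³)`, the quaternion algebras
`(−6j, −2(27j+16) | K)` and `(−6x, 2x | K)` are isomorphic as `K`-algebras. -/
theorem stmt_4 {K : Type*} [Field K] [CharZero K] (x y z : K)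
    (hx : x ≠ 0) (hy : y ≠ 0) (hz : z ≠ 0)
    (hrel : z ^ 2 + 3 * y ^ 2 + x ^ 3 = 0)
    (j : K) (hj : j = 16 * y ^ 2 / (9 * x ^ 3)) :
    Nonempty (ℍ[K, -6 * j, -2 * (27 * j + 16)] ≃ₐ[K] ℍ[K, -6 * x, 2 * x]) := by
  have hu : 4 * y / (3 * x ^ 2) ≠ 0 := by simp [hx, hy]
  have hv : 4 * z / x ^ 2 ≠ 0 := by simp [hx, hz]
  have h₁ : -6 * j = (4 * y / (3 * x ^ 2)) ^ 2 * (-6 * x) := by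
    rw [hj]; field_simp; ring
  have h₃ : -2 * (27 * j + 16) = (4 * z / x ^ 2) ^ 2 * (2 * x) := by
    rw [hj]; field_simp; linear_combination (-144) * hrel
  exact ⟨QuaternionAlgebra.scaleEquiv hu hv h₁ (mul_zero _).symm h₃⟩
end

section
/- Let K be a field of characteristic zero and let x, y, z ∈ K with y ≠ 0, z ≠ 0 and 8x³ − 25y² ≠ 0, satisfying 32x⁶ − 92x³y² − 25y⁴ + 729z² = 0. Set j = 27x³/(8x³−25y²). Then the quaternion algebras (−10(1−4j), 5(8j−27) | K) and (−10, 15(8x³−25y²) | K) are isomorphic as K-algebras. -/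
open scoped Quaternion

namespace QuaternionAlgebra

section Scale

variable {R A : Type*} [CommRing R] [Ring A] [Algebra R A] {c₁ c₂ c₃ c₁' c₂' c₃' : R}

-- The new parameters are passed as equations so that `equivOfScale` can also rescale by
-- `c⁻¹, d⁻¹` without casts.
@[simps i j k]
def Basis.scale_s9 (q : Basis A c₁ c₂ c₃) (c d : R) (h₁ : c₁' = c ^ 2 * c₁) (h₂ : c₂' = c * c₂)
    (h₃ : c₃' = d ^ 2 * c₃) : Basis A c₁' c₂' c₃' where
  i := c • q.i
  j := d • q.j
  k := (c * d) • q.k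
  i_mul_i := by
    rw [smul_mul_smul_comm, q.i_mul_i, smul_add, smul_smul, smul_smul, h₁, h₂, smul_smul]
    ring_nf
  j_mul_j := by rw [smul_mul_smul_comm, q.j_mul_j, smul_smul, h₃, sq]
  i_mul_j := by rw [smul_mul_smul_comm, q.i_mul_j]
  j_mul_i := by
    rw [smul_mul_smul_comm, q.j_mul_i, smul_sub, smul_smul, smul_smul, h₂, mul_comm d c]
    ring_nf

end Scale

noncomputable def equivOfScale {K : Type*} [Field K] {c₁ c₂ c₃ c₁' c₂' c₃' : K} {c d : K}
    (hc : c ≠ 0) (hd : d ≠ 0) (h₁ : c₁' = c ^ 2 * c₁) (h₂ : c₂' = c * c₂)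
    (h₃ : c₃' = d ^ 2 * c₃) : ℍ[K, c₁', c₂', c₃'] ≃ₐ[K] ℍ[K, c₁, c₂, c₃] :=
  AlgEquiv.ofAlgHom ((Basis.self K).scale_s9 c d h₁ h₂ h₃).liftHom
    ((Basis.self K).scale_s9 c⁻¹ d⁻¹ (by rw [h₁]; field_simp) (by rw [h₂]; field_simp)
      (by rw [h₃]; field_simp)).liftHom
    (hom_ext (by simp [Basis.lift, hc]) (by simp [Basis.lift, hd]))
    (hom_ext (by simp [Basis.lift, hc]) (by simp [Basis.lift, hd]))

end QuaternionAlgebra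

/-- For a field `K` of characteristic zero and `x, y, z ∈ K` with `y ≠ 0`,
`z ≠ 0` and `8x³ − 25y² ≠ 0`, satisfying `32x⁶ − 92x³y² − 25y⁴ + 729z² = 0`, setting
`j = 27x³/(8x³−25y²)`, the quaternion algebras `(−10(1−4j), 5(8j−27) | K)` and
`(−10, 15(8x³−25y²) | K)` are isomorphic as `K`-algebras. -/
theorem stmt_9 {K : Type*} [Field K] [CharZero K] (x y z : K)
    (hy : y ≠ 0) (hz : z ≠ 0) (hxy : 8 * x ^ 3 - 25 * y ^ 2 ≠ 0)
    (hrel : 32 * x ^ 6 - 92 * x ^ 3 * y ^ 2 - 25 * y ^ 4 + 729 * z ^ 2 = 0)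
    (j : K) (hj : j = 27 * x ^ 3 / (8 * x ^ 3 - 25 * y ^ 2)) :
    Nonempty (ℍ[K, -10 * (1 - 4 * j), 5 * (8 * j - 27)] ≃ₐ[K]
      ℍ[K, -10, 15 * (8 * x ^ 3 - 25 * y ^ 2)]) := by
  set D := 8 * x ^ 3 - 25 * y ^ 2
  -- The relation says exactly that `1 - 4j = (135z / D) ^ 2`, while `8j - 27 = 675y² / D`.
  have h₁ : -10 * (1 - 4 * j) = (135 * z / D) ^ 2 * -10 := by
    rw [hj]
    field_simp
    linear_combination 25 * hrel
  have h₃ : 5 * (8 * j - 27) = (15 * y / D) ^ 2 * (15 * D) := by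
    rw [hj]
    field_simp
    ring
  have hc : 135 * z / D ≠ 0 := div_ne_zero (mul_ne_zero (by norm_num) hz) hxy
  have hd : 15 * y / D ≠ 0 := div_ne_zero (mul_ne_zero (by norm_num) hy) hxy
  exact ⟨QuaternionAlgebra.equivOfScale hc hd h₁ (mul_zero _).symm h₃⟩
end
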